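/- In one variable (n=1): for every nonzero Laurent polynomial symbol p(z) = Σ_{α∈A} c_α z^α with c_α ∈ ℂ, there exists f : Z → ℂ such that Σ_{α∈A} c_α f(m+α) = δ(m) for all m ∈ Z, where δ(0)=1 and δ(m)=0 otherwise. -/

import Mathlib

/-!
Identify `f : ℤ → K` with the formal Laurent series `∑ n, f n Xⁿ`. The difference operator
`f ↦ (m ↦ ∑ α ∈ A, c α * f (m + α))` is then multiplication by the Laurent polynomial
`∑ α ∈ A, c α X^(-α)`, which is nonzero and hence invertible in the field `K⸨X⸩` of Laurent
series. The coefficients of its inverse form a fundamental solution.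
-/

open HahnSeries

variable {K : Type*} [Field K]

noncomputable def differenceSymbol (A : Finset ℤ) (c : ℤ → K) : LaurentSeries K :=
  ∑ α ∈ A, single (-α) (c α)

theorem coeff_differenceSymbol_mul (A : Finset ℤ) (c : ℤ → K) (F : LaurentSeries K) (m : ℤ) :
    (differenceSymbol A c * F).coeff m = ∑ α ∈ A, c α * F.coeff (m + α) := by
  simp [differenceSymbol, Finset.sum_mul, coeff_single_mul]

theorem coeff_differenceSymbol_neg {A : Finset ℤ} (c : ℤ → K) {α : ℤ} (hα : α ∈ A) :
    (differenceSymbol A c).coeff (-α) = c α := by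
  simp [differenceSymbol, coeff_single, hα]

theorem differenceSymbol_ne_zero {A : Finset ℤ} {c : ℤ → K} (hne : ∃ α ∈ A, c α ≠ 0) :
    differenceSymbol A c ≠ 0 := by
  obtain ⟨α, hα, hcα⟩ := hne
  intro h
  exact hcα (by rw [← coeff_differenceSymbol_neg c hα, h, HahnSeries.coeff_zero])

theorem exists_fundamental_solution {A : Finset ℤ} {c : ℤ → K} (hne : ∃ α ∈ A, c α ≠ 0) :
    ∃ f : ℤ → K, ∀ m : ℤ, (∑ α ∈ A, c α * f (m + α)) = if m = 0 then 1 else 0 := by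
  refine ⟨(differenceSymbol A c)⁻¹.coeff, fun m => ?_⟩
  rw [← coeff_differenceSymbol_mul, mul_inv_cancel₀ (differenceSymbol_ne_zero hne)]
  -- `coeff_one` decides `m = 0` classically, hence `convert` rather than `exact`.
  convert coeff_one

/-- One-dimensional discrete Malgrange–Ehrenpreis theorem: every nonzero
linear ordinary difference operator with constant coefficients has a
fundamental solution. -/
theorem discrete_malgrange_ehrenpreis_one_var (A : Finset ℤ) (c : ℤ → ℂ)
    (hne : ∃ α ∈ A, c α ≠ 0) :
    ∃ f : ℤ → ℂ, ∀ m : ℤ,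
      (∑ α ∈ A, c α * f (m + α)) = if m = 0 then 1 else 0 :=
  exists_fundamental_solution hne
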